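/- arXiv:0706.1483 — 2 statements merged into one kernel-verified Lean document; each statement's English description precedes it below -/
import Mathlib

section
/- For every x ∈ ℝ^d, every k ∈ ℤ^d, and every ω ∈ Ω there is a unique ω' ∈ Ω such that 𝔡(x, ω) = 𝔡(x + k, ω'). Moreover, if x, x' ∈ ℝ^d and ω, ω' ∈ Ω satisfy 𝔡(x, ω) = 𝔡(x', ω'), then x' − x ∈ ℤ^d. -/
open Matrix MeasureTheory Filter Topology

noncomputable section

/-- The integer lattice ℤ^d inside ℝ^d. -/
def intLattice (d : ℕ) : AddSubgroup (Fin d → ℝ) where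
  carrier := {x | ∀ i, ∃ k : ℤ, x i = (k : ℝ)}
  zero_mem' := fun i => ⟨0, by simp⟩
  add_mem' := by
    intro x y hx hy i
    obtain ⟨a, ha⟩ := hx i
    obtain ⟨b, hb⟩ := hy i
    exact ⟨a + b, by simp [ha, hb]⟩
  neg_mem' := by
    intro x hx i
    obtain ⟨a, ha⟩ := hx i
    exact ⟨-a, by simp [ha]⟩

/-- The torus ℝ^d / ℤ^d. -/
abbrev Torus (d : ℕ) := (Fin d → ℝ) ⧸ intLattice d

/-- The quotient homomorphism π : ℝ^d → 𝕋^d. -/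
def torusMk (d : ℕ) : (Fin d → ℝ) →+ Torus d := QuotientAddGroup.mk' (intLattice d)

/-- A square integer matrix is expansive if all of its complex eigenvalues `μ`
satisfy `|μ| > 1`. -/
def Expansive {d : ℕ} (A : Matrix (Fin d) (Fin d) ℤ) : Prop :=
  ∀ μ : ℂ, (Matrix.charpoly (A.map (Int.cast : ℤ → ℂ))).IsRoot μ → 1 < ‖μ‖

/-- The real matrix associated to an integer matrix. -/
def toR {d : ℕ} (A : Matrix (Fin d) (Fin d) ℤ) : Matrix (Fin d) (Fin d) ℝ :=
  A.map (Int.cast : ℤ → ℝ)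

lemma latticeMap_aux {d : ℕ} (M : Matrix (Fin d) (Fin d) ℤ) :
    intLattice d ≤ (intLattice d).comap (toR M).mulVecLin.toAddMonoidHom := by
  intro x hx
  choose k hk using hx
  intro i
  refine ⟨∑ j, M i j * k j, ?_⟩
  have : (toR M).mulVecLin.toAddMonoidHom x i = ∑ j, (M i j : ℝ) * (k j : ℝ) := by
    simp [toR, Matrix.mulVec, dotProduct, hk, Matrix.map_apply]
  rw [this]
  push_cast
  ring

/-- The endomorphism of the torus induced by an integer matrix. -/
def torusHom {d : ℕ} (M : Matrix (Fin d) (Fin d) ℤ) : Torus d →+ Torus d :=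
  QuotientAddGroup.map _ _ (toR M).mulVecLin.toAddMonoidHom (latticeMap_aux M)

/-- The solenoid `S_A`, as an additive subgroup of `(𝕋^d)^ℕ`. -/
def solenoid {d : ℕ} (A : Matrix (Fin d) (Fin d) ℤ) : AddSubgroup (ℕ → Torus d) where
  carrier := {z | ∀ n, torusHom Aᵀ (z (n + 1)) = z n}
  zero_mem' := by intro n; simp
  add_mem' := by
    intro a b ha hb n
    simp only [Pi.add_apply, map_add, ha n, hb n]
  neg_mem' := by
    intro a ha n
    simp only [Pi.neg_apply, map_neg, ha n]

/-- The shift automorphism σ_A of the solenoid (written on the ambient space). -/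
def sigmaA {d : ℕ} (A : Matrix (Fin d) (Fin d) ℤ) (z : ℕ → Torus d) : ℕ → Torus d
  | 0 => torusHom Aᵀ (z 0)
  | n + 1 => z n

/-- The embedding î : ℝ^d → S_A, î(x) = (π((Aᵀ)^{-n} x))ₙ. -/
def ihat {d : ℕ} (A : Matrix (Fin d) (Fin d) ℤ) (x : Fin d → ℝ) : ℕ → Torus d :=
  fun n => torusMk d ((((toR A)ᵀ)⁻¹ ^ n).mulVec x)

end

/-- D is a complete set of representatives of ℤ^d / Aᵀℤ^d. -/
def CompleteDigits {d : ℕ} (A : Matrix (Fin d) (Fin d) ℤ) (D : Set (Fin d → ℤ)) : Prop :=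
  ∀ x : Fin d → ℤ, ∃! v : Fin d → ℤ, v ∈ D ∧ ∃ y : Fin d → ℤ, x - v = Aᵀ.mulVec y

/-- The affine map τ_v(x) = (Aᵀ)⁻¹(x + v) for a digit v ∈ ℤ^d. -/
noncomputable def tauD {d : ℕ} (A : Matrix (Fin d) (Fin d) ℤ) (v : Fin d → ℤ)
    (x : Fin d → ℝ) : Fin d → ℝ :=
  (((toR A)ᵀ)⁻¹).mulVec (x + fun i => (v i : ℝ))

/-- The attractor X(Aᵀ, D) = { ∑_{j≥1} (Aᵀ)^{−j} d_j : d_j ∈ D }. -/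
def attractor (d : ℕ) (A : Matrix (Fin d) (Fin d) ℤ) (D : Set (Fin d → ℤ)) :
    Set (Fin d → ℝ) :=
  {x | ∃ dig : ℕ → Fin d → ℤ, (∀ j, dig j ∈ D) ∧
    HasSum (fun j : ℕ => ((((toR A)ᵀ)⁻¹) ^ (j + 1)).mulVec fun i => (dig j i : ℝ)) x}

/-- Iterated maps: tauWord ω n = τ_{ω_{n−1}} ∘ ⋯ ∘ τ_{ω_0} (identity for n = 0). -/
noncomputable def tauWord {d : ℕ} (A : Matrix (Fin d) (Fin d) ℤ)
    (ω : ℕ → Fin d → ℤ) : ℕ → (Fin d → ℝ) → Fin d → ℝ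
  | 0 => fun x => x
  | n + 1 => fun x => tauD A (ω n) (tauWord A ω n x)

/-- The decoding map 𝔡 : ℝ^d × Ω → S_A, 𝔡(x,ω)_n = π(τ_{ω_{n−1}}⋯τ_{ω_0} x). -/
noncomputable def codeMap {d : ℕ} (A : Matrix (Fin d) (Fin d) ℤ)
    (x : Fin d → ℝ) (ω : ℕ → Fin d → ℤ) : ℕ → Torus d :=
  fun n => torusMk d (tauWord A ω n x)


/-!
Translating `x` by `k ∈ ℤ^d` is absorbed by an integer carry. If `y + m` is the point reached from
`x + k`, where `y` is the point reached from `x` and `m ∈ ℤ^d`, choose the new digit `w ∈ D` with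
`m + w - v = Aᵀ m'` for the old digit `v`. Then `τ_w (y + m) = τ_v y + m'`, so the two orbits agree
modulo `ℤ^d` at every step. Conversely, two digits applied to the same point give the same element of
the torus only if they differ by `Aᵀ (ℤ^d)`. As `D` is a set of representatives, they are then equal,
and this gives uniqueness. The second claim is just the `0`-th coordinate of the solenoid.
-/

section Lattice

variable {d : ℕ}

def castVec (v : Fin d → ℤ) : Fin d → ℝ := fun i => (v i : ℝ)

lemma castVec_injective : Function.Injective (castVec (d := d)) :=
  fun _ _ h => funext fun i => Int.cast_injective (congrFun h i)

@[simp] lemma castVec_add (v w : Fin d → ℤ) : castVec (v + w) = castVec v + castVec w := by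
  funext i; simp [castVec]

@[simp] lemma castVec_sub (v w : Fin d → ℤ) : castVec (v - w) = castVec v - castVec w := by
  funext i; simp [castVec]

lemma mem_intLattice_iff {x : Fin d → ℝ} : x ∈ intLattice d ↔ ∃ v, x = castVec v := by
  constructor
  · intro h
    choose v hv using h
    exact ⟨v, funext hv⟩
  · rintro ⟨v, rfl⟩ i
    exact ⟨v i, rfl⟩

lemma torusMk_eq_torusMk_iff {a b : Fin d → ℝ} :
    torusMk d a = torusMk d b ↔ a - b ∈ intLattice d :=
  QuotientAddGroup.eq_iff_sub_mem

lemma toR_mulVec_castVec (M : Matrix (Fin d) (Fin d) ℤ) (v : Fin d → ℤ) :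
    toR M *ᵥ castVec v = castVec (M *ᵥ v) := by
  funext i
  simp [toR, castVec, mulVec, dotProduct]

lemma toR_transpose (M : Matrix (Fin d) (Fin d) ℤ) : toR Mᵀ = (toR M)ᵀ :=
  transpose_map

lemma Expansive.isUnit_det_toR {A : Matrix (Fin d) (Fin d) ℤ} (hA : Expansive A) :
    IsUnit (toR A).det := by
  have hC : IsUnit (A.map (Int.cast : ℤ → ℂ)) := by
    by_contra h
    have h0 := hA 0 (mem_spectrum_iff_isRoot_charpoly.mp ((spectrum.zero_mem_iff ℂ).mpr h))
    norm_num at h0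
  rw [isUnit_iff_isUnit_det, ← Int.cast_det, isUnit_iff_ne_zero, Int.cast_ne_zero] at hC
  rw [toR, ← Int.cast_det, isUnit_iff_ne_zero]
  exact_mod_cast hC

end Lattice

section Invertible

variable {d : ℕ} {A : Matrix (Fin d) (Fin d) ℤ}

lemma inv_mulVec_castVec_transpose_mulVec (hA : IsUnit (toR A).det) (q : Fin d → ℤ) :
    ((toR A)ᵀ)⁻¹ *ᵥ castVec (Aᵀ *ᵥ q) = castVec q := by
  rw [← toR_mulVec_castVec, toR_transpose, mulVec_mulVec,
    nonsing_inv_mul _ (isUnit_det_transpose _ hA), one_mulVec]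

lemma exists_eq_transpose_mulVec_of_inv_mulVec_mem (hA : IsUnit (toR A).det) {m : Fin d → ℤ}
    (h : ((toR A)ᵀ)⁻¹ *ᵥ castVec m ∈ intLattice d) : ∃ y, m = Aᵀ *ᵥ y := by
  obtain ⟨y, hy⟩ := mem_intLattice_iff.mp h
  refine ⟨y, castVec_injective ?_⟩
  rw [← toR_mulVec_castVec, toR_transpose, ← hy, mulVec_mulVec,
    mul_nonsing_inv _ (isUnit_det_transpose _ hA), one_mulVec]

lemma tauD_add_castVec (hA : IsUnit (toR A).det) {v w m m' : Fin d → ℤ}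
    (h : m + w - v = Aᵀ *ᵥ m') (y : Fin d → ℝ) :
    tauD A w (y + castVec m) = tauD A v y + castVec m' := by
  have hsplit : y + castVec m + castVec w = y + castVec v + castVec (Aᵀ *ᵥ m') := by
    rw [← h]
    simp only [castVec_add, castVec_sub]
    abel
  change ((toR A)ᵀ)⁻¹ *ᵥ (y + castVec m + castVec w) = ((toR A)ᵀ)⁻¹ *ᵥ (y + castVec v) + _
  rw [hsplit, mulVec_add, inv_mulVec_castVec_transpose_mulVec hA]

variable {D : Set (Fin d → ℤ)}

lemma eq_of_torusMk_tauD_eq (hA : IsUnit (toR A).det) (hD : CompleteDigits A D)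
    {v w : Fin d → ℤ} (hv : v ∈ D) (hw : w ∈ D) {z : Fin d → ℝ}
    (h : torusMk d (tauD A v z) = torusMk d (tauD A w z)) : v = w := by
  have hsub : tauD A v z - tauD A w z = ((toR A)ᵀ)⁻¹ *ᵥ castVec (v - w) := by
    change ((toR A)ᵀ)⁻¹ *ᵥ (z + castVec v) - ((toR A)ᵀ)⁻¹ *ᵥ (z + castVec w) = _
    rw [← mulVec_sub, castVec_sub, add_sub_add_left_eq_sub]
  rw [torusMk_eq_torusMk_iff, hsub] at h
  obtain ⟨y, hy⟩ := exists_eq_transpose_mulVec_of_inv_mulVec_mem hA h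
  exact (hD v).unique ⟨hv, 0, by simp⟩ ⟨hw, y, hy⟩

lemma eq_of_codeMap_eq (hA : IsUnit (toR A).det) (hD : CompleteDigits A D)
    {y : Fin d → ℝ} {ω₁ ω₂ : ℕ → Fin d → ℤ} (h₁ : ∀ n, ω₁ n ∈ D) (h₂ : ∀ n, ω₂ n ∈ D)
    (h : codeMap A y ω₁ = codeMap A y ω₂) : ω₁ = ω₂ := by
  have digit_eq : ∀ n, tauWord A ω₁ n y = tauWord A ω₂ n y → ω₁ n = ω₂ n := by
    intro n hn
    have hcoord : torusMk d (tauD A (ω₁ n) (tauWord A ω₁ n y))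
        = torusMk d (tauD A (ω₂ n) (tauWord A ω₂ n y)) := congrFun h (n + 1)
    rw [← hn] at hcoord
    exact eq_of_torusMk_tauD_eq hA hD (h₁ n) (h₂ n) hcoord
  have hword : ∀ n, tauWord A ω₁ n y = tauWord A ω₂ n y := by
    intro n
    induction n with
    | zero => rfl
    | succ n ih => simp only [tauWord, ih, digit_eq n ih]
  exact funext fun n => digit_eq n (hword n)

end Invertible

namespace CompleteDigits

variable {d : ℕ} {A : Matrix (Fin d) (Fin d) ℤ} {D : Set (Fin d → ℤ)}

lemma exists_digit (hD : CompleteDigits A D) (t : Fin d → ℤ) :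
    ∃ v ∈ D, ∃ q, v - t = Aᵀ *ᵥ q := by
  obtain ⟨v, ⟨hv, y, hy⟩, -⟩ := hD t
  exact ⟨v, hv, -y, by rw [mulVec_neg, ← hy, neg_sub]⟩

noncomputable def digit (hD : CompleteDigits A D) (t : Fin d → ℤ) : Fin d → ℤ :=
  (hD.exists_digit t).choose

noncomputable def carry (hD : CompleteDigits A D) (t : Fin d → ℤ) : Fin d → ℤ :=
  (hD.exists_digit t).choose_spec.2.choose

lemma digit_mem (hD : CompleteDigits A D) (t : Fin d → ℤ) : hD.digit t ∈ D :=
  (hD.exists_digit t).choose_spec.1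

lemma digit_sub (hD : CompleteDigits A D) (t : Fin d → ℤ) :
    hD.digit t - t = Aᵀ *ᵥ hD.carry t :=
  (hD.exists_digit t).choose_spec.2.choose_spec

noncomputable def translateCarry (hD : CompleteDigits A D) (ω : ℕ → Fin d → ℤ)
    (k : Fin d → ℤ) : ℕ → Fin d → ℤ
  | 0 => k
  | n + 1 => hD.carry (ω n - hD.translateCarry ω k n)

noncomputable def translateDigits (hD : CompleteDigits A D) (ω : ℕ → Fin d → ℤ)
    (k : Fin d → ℤ) (n : ℕ) : Fin d → ℤ :=
  hD.digit (ω n - hD.translateCarry ω k n)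

lemma translateDigits_mem (hD : CompleteDigits A D) (ω : ℕ → Fin d → ℤ) (k : Fin d → ℤ)
    (n : ℕ) : hD.translateDigits ω k n ∈ D :=
  hD.digit_mem _

lemma translateCarry_add_translateDigits_sub (hD : CompleteDigits A D)
    (ω : ℕ → Fin d → ℤ) (k : Fin d → ℤ) (n : ℕ) :
    hD.translateCarry ω k n + hD.translateDigits ω k n - ω n
      = Aᵀ *ᵥ hD.translateCarry ω k (n + 1) := by
  rw [translateCarry, ← digit_sub, translateDigits]
  abel

lemma tauWord_translateDigits (hA : IsUnit (toR A).det) (hD : CompleteDigits A D)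
    (ω : ℕ → Fin d → ℤ) (k : Fin d → ℤ) (x : Fin d → ℝ) (n : ℕ) :
    tauWord A (hD.translateDigits ω k) n (x + castVec k)
      = tauWord A ω n x + castVec (hD.translateCarry ω k n) := by
  induction n with
  | zero => rfl
  | succ n ih =>
    simp only [tauWord, ih]
    exact tauD_add_castVec hA (hD.translateCarry_add_translateDigits_sub ω k n) _

lemma codeMap_translateDigits (hA : IsUnit (toR A).det) (hD : CompleteDigits A D)
    (ω : ℕ → Fin d → ℤ) (k : Fin d → ℤ) (x : Fin d → ℝ) :
    codeMap A x ω = codeMap A (x + castVec k) (hD.translateDigits ω k) := by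
  funext n
  rw [codeMap, codeMap, hD.tauWord_translateDigits hA, eq_comm, torusMk_eq_torusMk_iff,
    add_sub_cancel_left, mem_intLattice_iff]
  exact ⟨_, rfl⟩

end CompleteDigits

theorem statement9_general (d : ℕ) (A : Matrix (Fin d) (Fin d) ℤ)
    (hA : Expansive A) (D : Set (Fin d → ℤ)) (hD : CompleteDigits A D) :
    (∀ (x : Fin d → ℝ) (k : Fin d → ℤ) (ω : ℕ → Fin d → ℤ), (∀ n, ω n ∈ D) →
      ∃! ω' : ℕ → Fin d → ℤ, (∀ n, ω' n ∈ D) ∧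
        codeMap A x ω = codeMap A (x + fun i => (k i : ℝ)) ω') ∧
    ∀ (x x' : Fin d → ℝ) (ω ω' : ℕ → Fin d → ℤ),
      (∀ n, ω n ∈ D) → (∀ n, ω' n ∈ D) →
      codeMap A x ω = codeMap A x' ω' → (x' - x) ∈ intLattice d := by
  have hdet := hA.isUnit_det_toR
  constructor
  · intro x k ω _
    have hcode := hD.codeMap_translateDigits hdet ω k x
    refine ⟨hD.translateDigits ω k, ⟨hD.translateDigits_mem ω k, hcode⟩, ?_⟩
    rintro ω' ⟨hω', hcode'⟩
    exact eq_of_codeMap_eq hdet hD hω' (hD.translateDigits_mem ω k) (hcode'.symm.trans hcode)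
  · intro x x' ω ω' _ _ h
    have h0 : torusMk d x = torusMk d x' := congrFun h 0
    simpa using neg_mem (torusMk_eq_torusMk_iff.mp h0)

/-- for every x, k and digit string ω there is a unique digit
string ω' with 𝔡(x, ω) = 𝔡(x + k, ω'); and if 𝔡(x,ω) = 𝔡(x',ω') then
x' − x ∈ ℤ^d. -/
theorem statement9 (d : ℕ) (hd : 0 < d) (A : Matrix (Fin d) (Fin d) ℤ)
    (hA : Expansive A) (D : Set (Fin d → ℤ)) (hD : CompleteDigits A D) :
    (∀ (x : Fin d → ℝ) (k : Fin d → ℤ) (ω : ℕ → Fin d → ℤ), (∀ n, ω n ∈ D) →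
      ∃! ω' : ℕ → Fin d → ℤ, (∀ n, ω' n ∈ D) ∧
        codeMap A x ω = codeMap A (x + fun i => (k i : ℝ)) ω') ∧
    ∀ (x x' : Fin d → ℝ) (ω ω' : ℕ → Fin d → ℤ),
      (∀ n, ω n ∈ D) → (∀ n, ω' n ∈ D) →
      codeMap A x ω = codeMap A x' ω' → (x' - x) ∈ intLattice d :=
  statement9_general d A hA D hD
end

section
/- Let C = (θ_j, l_j)_{j∈ℤ/pℤ} be a simple cycle of length p for (τ_d)_{d∈D}. Then for every k ∈ ℤ^d and j ∈ ℤ/pℤ there exists a unique sequence ω : ℕ → D such that for all x ∈ ℝ^d and all n ∈ ℕ: τ_{ω_{n−1}}∘⋯∘τ_{ω_0}(x) − (A^T)^{−n}(x + k − θ_j) − θ_{j+n} ∈ ℤ^d (for n = 0 the composition is the identity). Moreover, writing R_C^n(k, j) = (a_n, j + n) (so a_0 = k), the digits are given by ω_n = (a_n − θ_{j+n}) − A^T(a_{n+1} − θ_{j+n+1}) for all n ∈ ℕ, and ω is eventually periodic: there exist N ∈ ℕ and q ≥ 1 with ω_{n+q} = ω_n for all n ≥ N. -/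
open Matrix MeasureTheory Filter Topology

/-!
Follow the orbit `(a n, j + n) = R_C^n (k, j)` and put `u n = a n - θ (j + n)`. The defining
relation of `R_C` says that `ω n := u n - Aᵀ u (n + 1)` is a digit, and a telescoping induction
gives `τ_{ω (n-1)} ∘ ⋯ ∘ τ_{ω 0} x = (Aᵀ)⁻ⁿ (x + u 0) - u n`, which is the required congruence
because `u n + θ (j + n) = a n` is integral. Two digit strings with congruent iterates differ, at
the first index where they differ, by an element of `Aᵀ ℤ^d`, which is impossible for distinct
representatives. Finally `u (n + 1) = (Aᵀ)⁻¹ (u n - ω n)`, `D` is finite and `∑ ‖(Aᵀ)⁻ⁿ‖ < ∞`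
(Gelfand's formula, as the spectrum of `(Aᵀ)⁻¹` lies in the open unit disc), so the orbit is
bounded, takes finitely many values, and is eventually periodic; hence so is `ω`.
-/

theorem summable_norm_pow_of_norm_lt_one_of_mem_spectrum {𝔸 : Type*} [NormedRing 𝔸]
    [NormedAlgebra ℂ 𝔸] [CompleteSpace 𝔸] {a : 𝔸} (h : ∀ z ∈ spectrum ℂ a, ‖z‖ < 1) :
    Summable fun n => ‖a ^ n‖ := by
  have hr : spectralRadius ℂ a < 1 := by
    rcases (spectrum ℂ a).eq_empty_or_nonempty with he | hne
    · simp [spectralRadius, he]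
    · exact_mod_cast spectrum.spectralRadius_lt_of_forall_lt_of_nonempty hne (r := 1)
        fun z hz => by exact_mod_cast h z hz
  obtain ⟨ρ, hρr, hρ1⟩ := ENNReal.lt_iff_exists_nnreal_btwn.mp hr
  refine Summable.of_norm_bounded_eventually_nat
    (summable_geometric_of_lt_one ρ.coe_nonneg (by exact_mod_cast hρ1)) ?_
  filter_upwards
    [(spectrum.pow_norm_pow_one_div_tendsto_nhds_spectralRadius a).eventually_lt_const hρr,
    eventually_gt_atTop 0] with n hn hn0
  rw [← ENNReal.ofReal_coe_nnreal, ENNReal.ofReal_lt_ofReal_iff', one_div,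
    Real.rpow_inv_lt_iff_of_pos (norm_nonneg _) ρ.coe_nonneg (by positivity),
    Real.rpow_natCast] at hn
  rw [norm_norm]
  exact hn.1.le

theorem Function.exists_iterate_add_eq_of_finite_range {α : Type*} {f : α → α} {x : α}
    (h : (Set.range fun n => f^[n] x).Finite) :
    ∃ N q : ℕ, 1 ≤ q ∧ ∀ n, N ≤ n → f^[n + q] x = f^[n] x := by
  obtain ⟨a, b, hab, he⟩ := h.exists_lt_map_eq_of_forall_mem fun n => Set.mem_range_self n
  refine ⟨a, b - a, by omega, fun n hn => ?_⟩
  obtain ⟨c, rfl⟩ := Nat.exists_eq_add_of_le hn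
  rw [show a + c + (b - a) = c + b by omega, add_comm a c, iterate_add_apply, iterate_add_apply,
    he]

theorem finite_setOf_norm_intCast_le (d : ℕ) (r : ℝ) :
    {a : Fin d → ℤ | ‖(fun i => (a i : ℝ))‖ ≤ r}.Finite := by
  convert (isCompact_closedBall (0 : Fin d → ℤ) r).finite_of_discrete using 1
  have hcast (m : ℤ) : ‖(m : ℝ)‖₊ = ‖m‖₊ := NNReal.eq (Int.norm_cast_real m)
  ext a
  simp [Pi.norm_def, hcast]

theorem Function.exists_iterate_add_eq_of_norm_sub_le {d : ℕ} {ι : Type*} [Finite ι]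
    {R : (Fin d → ℤ) × ι → (Fin d → ℤ) × ι} (x : (Fin d → ℤ) × ι) {c : ℕ → Fin d → ℝ}
    (hc : (Set.range c).Finite) {r : ℝ} (h : ∀ n, ‖(fun i => ((R^[n] x).1 i : ℝ)) - c n‖ ≤ r) :
    ∃ N q : ℕ, 1 ≤ q ∧ ∀ n, N ≤ n → R^[n + q] x = R^[n] x := by
  obtain ⟨T, hT⟩ := (hc.image norm).bddAbove
  refine exists_iterate_add_eq_of_finite_range
    (((finite_setOf_norm_intCast_le d (r + T)).prod Set.finite_univ).subset ?_)
  rintro _ ⟨n, rfl⟩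
  refine ⟨?_, Set.mem_univ _⟩
  calc ‖(fun i => ((R^[n] x).1 i : ℝ))‖
      = ‖((fun i => ((R^[n] x).1 i : ℝ)) - c n) + c n‖ := by rw [sub_add_cancel]
    _ ≤ r + T := (norm_add_le _ _).trans (add_le_add (h n) (hT ⟨_, ⟨n, rfl⟩, rfl⟩))

section LinftyOpNorm

attribute [local instance] Matrix.linftyOpNormedAddCommGroup Matrix.linftyOpNormedRing
  Matrix.linftyOpNormedAlgebra

theorem Matrix.linfty_opNorm_map_ofReal {m n : Type*} [Fintype m] [Fintype n]
    (Q : Matrix m n ℝ) : ‖Q.map Complex.ofReal‖ = ‖Q‖ := by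
  simp [linfty_opNorm_def]

theorem Matrix.norm_le_of_mulVec_recurrence {m : Type*} [Fintype m] [DecidableEq m]
    {M : Matrix m m ℝ} (hM : Summable fun n => ‖M ^ n‖) {u e : ℕ → m → ℝ} {K : ℝ}
    (he : ∀ n, ‖e n‖ ≤ K) (hu : ∀ n, u (n + 1) = M *ᵥ (u n - e n)) (n : ℕ) :
    ‖u n‖ ≤ (∑' t, ‖M ^ t‖) * (‖u 0‖ + K) := by
  have closed : ∀ n,
      u n = (M ^ n) *ᵥ u 0 - ∑ t ∈ Finset.range n, M ^ (t + 1) *ᵥ e (n - 1 - t) := by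
    intro n
    induction n with
    | zero => simp
    | succ n ih =>
      rw [hu, ih, Finset.sum_range_succ', sub_sub, mulVec_sub, mulVec_add, mulVec_sum,
        mulVec_mulVec, ← pow_succ']
      congr 2
      · refine Finset.sum_congr rfl fun t _ => ?_
        rw [mulVec_mulVec, ← pow_succ']
        congr 2
        omega
      · simp
  have hK : 0 ≤ K := (norm_nonneg _).trans (he 0)
  have hsum : ∑ t ∈ Finset.range n, ‖M ^ (t + 1)‖ ≤ ∑' t, ‖M ^ t‖ := by
    calc ∑ t ∈ Finset.range n, ‖M ^ (t + 1)‖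
        ≤ ∑ t ∈ Finset.range (n + 1), ‖M ^ t‖ := by
          rw [Finset.sum_range_succ']
          exact le_add_of_nonneg_right (norm_nonneg _)
      _ ≤ ∑' t, ‖M ^ t‖ := hM.sum_le_tsum _ fun _ _ => norm_nonneg _
  calc ‖u n‖
      ≤ ‖M ^ n‖ * ‖u 0‖ + ∑ t ∈ Finset.range n, ‖M ^ (t + 1)‖ * K := by
        rw [closed n]
        refine (norm_sub_le _ _).trans (add_le_add (linfty_opNorm_mulVec _ _) ?_)
        refine (norm_sum_le _ _).trans (Finset.sum_le_sum fun t _ => ?_)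
        exact (linfty_opNorm_mulVec _ _).trans (mul_le_mul_of_nonneg_left (he _) (norm_nonneg _))
    _ ≤ (∑' t, ‖M ^ t‖) * ‖u 0‖ + (∑' t, ‖M ^ t‖) * K := by
        rw [← Finset.sum_mul]
        exact add_le_add (mul_le_mul_of_nonneg_right (hM.le_tsum n fun _ _ => norm_nonneg _)
          (norm_nonneg _)) (mul_le_mul_of_nonneg_right hsum hK)
    _ = (∑' t, ‖M ^ t‖) * (‖u 0‖ + K) := by ring

namespace Expansive

variable {d : ℕ} {A : Matrix (Fin d) (Fin d) ℤ}

theorem det_ne_zero (hA : Expansive A) : A.det ≠ 0 := by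
  have hC : (A.map (Int.cast : ℤ → ℂ)).det ≠ 0 := by
    rw [det_eq_prod_roots_charpoly]
    refine Multiset.prod_ne_zero fun h0 => ?_
    exact absurd (hA 0 (Polynomial.isRoot_of_mem_roots h0)) (by simp)
  rw [show A.map (Int.cast : ℤ → ℂ) = (Int.castRingHom ℂ).mapMatrix A from rfl,
    ← RingHom.map_det] at hC
  exact fun h => hC (by simp [h])

theorem isUnit_det_transpose_toR (hA : Expansive A) : IsUnit ((toR A)ᵀ).det := by
  rw [det_transpose, toR, show A.map (Int.cast : ℤ → ℝ) = (Int.castRingHom ℝ).mapMatrix A from rfl,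
    ← RingHom.map_det]
  simpa using hA.det_ne_zero

theorem norm_lt_one_of_mem_spectrum (hA : Expansive A) {z : ℂ}
    (hz : z ∈ spectrum ℂ (Complex.ofRealHom.mapMatrix ((toR A)ᵀ⁻¹))) : ‖z‖ < 1 := by
  let u := Units.map Complex.ofRealHom.mapMatrix.toMonoidHom
    (nonsingInvUnit _ hA.isUnit_det_transpose_toR)
  have hu : (u : Matrix (Fin d) (Fin d) ℂ) = (A.map (Int.cast : ℤ → ℂ))ᵀ := by
    change Complex.ofRealHom.mapMatrix (toR A)ᵀ = _
    ext i j
    simp [toR]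
  rw [show Complex.ofRealHom.mapMatrix ((toR A)ᵀ⁻¹) = ↑u⁻¹ from rfl, ← spectrum.map_inv,
    Set.mem_inv, hu, mem_spectrum_iff_isRoot_charpoly, charpoly_transpose] at hz
  have := hA _ hz
  rw [norm_inv] at this
  exact (one_lt_inv₀ (norm_pos_iff.mpr (by rintro rfl; norm_num at this))).mp this

theorem summable_norm_pow_inv (hA : Expansive A) : Summable fun n => ‖((toR A)ᵀ⁻¹) ^ n‖ := by
  have : CompleteSpace (Matrix (Fin d) (Fin d) ℂ) := FiniteDimensional.complete ℂ _
  have := summable_norm_pow_of_norm_lt_one_of_mem_spectrum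
    fun z hz => hA.norm_lt_one_of_mem_spectrum hz
  refine this.congr fun n => ?_
  rw [← map_pow]
  exact linfty_opNorm_map_ofReal _

end Expansive

end LinftyOpNorm

namespace CompleteDigits

variable {d : ℕ} {A : Matrix (Fin d) (Fin d) ℤ} {D : Set (Fin d → ℤ)}

theorem eq_of_sub_eq_mulVec (hD : CompleteDigits A D) {v w y : Fin d → ℤ} (hv : v ∈ D)
    (hw : w ∈ D) (h : v - w = Aᵀ *ᵥ y) : v = w := by
  obtain ⟨z, -, hz⟩ := hD v
  exact (hz v ⟨hv, 0, by simp⟩).trans (hz w ⟨hw, y, h⟩).symm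

theorem finite (hD : CompleteDigits A D) (hA : A.det ≠ 0) : D.Finite := by
  -- `det A • ℤ^d ⊆ Aᵀ ℤ^d` (adjugate), so reduction mod `|det A|` is injective on `D`.
  have : NeZero A.det.natAbs := ⟨Int.natAbs_ne_zero.mpr hA⟩
  refine Set.Finite.of_finite_image (f := fun v i => (v i : ZMod A.det.natAbs))
    (Set.toFinite _) fun v hv w hw hvw => ?_
  have hdvd : ∀ i, A.det ∣ v i - w i := fun i => Int.natAbs_dvd.mp
    ((ZMod.intCast_eq_intCast_iff_dvd_sub _ _ _).mp (congrFun hvw i).symm)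
  choose c hc using hdvd
  refine hD.eq_of_sub_eq_mulVec hv hw (y := adjugate Aᵀ *ᵥ c) ?_
  rw [mulVec_mulVec, mul_adjugate, det_transpose, smul_mulVec, one_mulVec]
  ext i
  simp [hc]

end CompleteDigits

section TauWord

variable {d : ℕ} {A : Matrix (Fin d) (Fin d) ℤ}

theorem toR_mulVec_intCast (P : Matrix (Fin d) (Fin d) ℤ) (w : Fin d → ℤ) :
    toR P *ᵥ (fun i => (w i : ℝ)) = fun i => ((P *ᵥ w) i : ℝ) := by
  ext i
  simp [toR, mulVec, dotProduct]

theorem exists_eq_mulVec_of_inv_mulVec_mem_intLattice (hA : IsUnit ((toR A)ᵀ).det)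
    {v : Fin d → ℤ} (h : (toR A)ᵀ⁻¹ *ᵥ (fun i => (v i : ℝ)) ∈ intLattice d) :
    ∃ y, v = Aᵀ *ᵥ y := by
  choose y hy using h
  refine ⟨y, funext fun i => ?_⟩
  have hv : (fun i => (v i : ℝ)) = (toR A)ᵀ *ᵥ fun i => (y i : ℝ) := by
    rw [← funext hy, mulVec_mulVec, mul_nonsing_inv _ hA, one_mulVec]
  rw [show (toR A)ᵀ = toR Aᵀ from rfl, toR_mulVec_intCast] at hv
  exact_mod_cast congrFun hv i

theorem tauWord_congr {ω ω' : ℕ → Fin d → ℤ} {n : ℕ} (h : ∀ i < n, ω i = ω' i) :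
    tauWord A ω n = tauWord A ω' n := by
  induction n with
  | zero => rfl
  | succ n ih =>
    funext x
    simp only [tauWord, ih fun i hi => h i (Nat.lt_succ_of_lt hi), h n (Nat.lt_succ_self n)]

theorem tauWord_eq_of_digits (hA : IsUnit ((toR A)ᵀ).det) {ω : ℕ → Fin d → ℤ}
    {u : ℕ → Fin d → ℝ} (hω : ∀ n, (fun i => (ω n i : ℝ)) = u n - (toR A)ᵀ *ᵥ u (n + 1))
    (x : Fin d → ℝ) (n : ℕ) :
    tauWord A ω n x = ((toR A)ᵀ⁻¹ ^ n) *ᵥ (x + u 0) - u n := by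
  induction n with
  | zero => simp [tauWord]
  | succ n ih =>
    change tauD A (ω n) (tauWord A ω n x) = _
    rw [ih, tauD, hω, sub_add_sub_cancel, mulVec_sub, mulVec_mulVec, ← pow_succ',
      mulVec_mulVec, nonsing_inv_mul _ hA, one_mulVec]

theorem intCast_mem_intLattice (a : Fin d → ℤ) :
    (fun i => (a i : ℝ)) ∈ intLattice d := fun i => ⟨a i, rfl⟩

theorem tauWord_sub_mem_intLattice (hA : IsUnit ((toR A)ᵀ).det) {ω a : ℕ → Fin d → ℤ}
    {c : ℕ → Fin d → ℝ}
    (hω : ∀ n, (fun i => (ω n i : ℝ)) = ((fun i => (a n i : ℝ)) - c n) -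
      (toR A)ᵀ *ᵥ ((fun i => (a (n + 1) i : ℝ)) - c (n + 1)))
    (x : Fin d → ℝ) (n : ℕ) :
    tauWord A ω n x - ((toR A)ᵀ⁻¹ ^ n) *ᵥ (x + (fun i => (a 0 i : ℝ)) - c 0) - c n ∈
      intLattice d := by
  rw [tauWord_eq_of_digits hA hω, ← add_sub_assoc]
  convert neg_mem (intCast_mem_intLattice (a n)) using 1
  abel

theorem codeMap_injOn (hA : IsUnit ((toR A)ᵀ).det) {D : Set (Fin d → ℤ)}
    (hD : CompleteDigits A D) (x : Fin d → ℝ) :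
    Set.InjOn (codeMap A x) {ω | ∀ n, ω n ∈ D} := by
  intro ω hω ω' hω' h
  funext n
  induction n using Nat.strong_induction_on with
  | _ n ih =>
  have hprefix : tauWord A ω n x = tauWord A ω' n x :=
    congrFun (tauWord_congr fun i hi => ih i hi) x
  have hdiff : tauWord A ω (n + 1) x - tauWord A ω' (n + 1) x ∈ intLattice d :=
    QuotientAddGroup.eq_iff_sub_mem.mp (congrFun h (n + 1))
  rw [show tauWord A ω (n + 1) x - tauWord A ω' (n + 1) x =
      (toR A)ᵀ⁻¹ *ᵥ fun i => ((ω n - ω' n) i : ℝ) by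
    simp only [tauWord, tauD, hprefix, ← mulVec_sub]
    congr 1
    ext i
    simp] at hdiff
  obtain ⟨y, hy⟩ := exists_eq_mulVec_of_inv_mulVec_mem_intLattice hA hdiff
  exact hD.eq_of_sub_eq_mulVec (hω n) (hω' n) hy

end TauWord

theorem iterate_snd_eq {d p : ℕ} {R : (Fin d → ℤ) × ZMod p → (Fin d → ℤ) × ZMod p}
    (hR : ∀ a j, (R (a, j)).2 = j + 1) (k : Fin d → ℤ) (j : ZMod p) (n : ℕ) :
    (R^[n] (k, j)).2 = j + n := by
  induction n with
  | zero => simp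
  | succ n ih =>
    rw [Function.iterate_succ_apply', ← Prod.mk.eta (p := R^[n] (k, j)), hR, ih]
    push_cast
    ring

theorem intCast_digit_iterate_eq {d p : ℕ} {B : Matrix (Fin d) (Fin d) ℝ}
    {θ : ZMod p → Fin d → ℝ} {R : (Fin d → ℤ) × ZMod p → (Fin d → ℤ) × ZMod p}
    (hR : ∀ a j, (R (a, j)).2 = j + 1) {g : (Fin d → ℤ) → ZMod p → Fin d → ℤ}
    (hg : ∀ a j, (fun i => (a i : ℝ)) - θ j =
      B *ᵥ ((fun i => ((R (a, j)).1 i : ℝ)) - θ (j + 1)) + fun i => (g a j i : ℝ))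
    (k : Fin d → ℤ) (j : ZMod p) (n : ℕ) :
    (fun i => (g (R^[n] (k, j)).1 (R^[n] (k, j)).2 i : ℝ)) =
      ((fun i => ((R^[n] (k, j)).1 i : ℝ)) - θ (j + (n : ZMod p))) -
        B *ᵥ ((fun i => ((R^[n + 1] (k, j)).1 i : ℝ)) - θ (j + ((n + 1 : ℕ) : ZMod p))) := by
  have h := hg (R^[n] (k, j)).1 (R^[n] (k, j)).2
  rw [← hR (R^[n] (k, j)).1, Prod.mk.eta, ← Function.iterate_succ_apply' R n (k, j)] at h
  simp only [iterate_snd_eq hR] at h ⊢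
  exact eq_sub_of_add_eq' h.symm

theorem statement17_general (d : ℕ) (A : Matrix (Fin d) (Fin d) ℤ)
    (hA : Expansive A) (D : Set (Fin d → ℤ)) (hD : CompleteDigits A D)
    (p : ℕ) (hp : 0 < p) (θ : ZMod p → Fin d → ℝ)
    (R : (Fin d → ℤ) × ZMod p → (Fin d → ℤ) × ZMod p)
    (hR : ∀ (a : Fin d → ℤ) (j : ZMod p), (R (a, j)).2 = j + 1 ∧
      ∃ d₀ ∈ D, (fun i => (a i : ℝ)) - θ j =
        (toR A)ᵀ.mulVec ((fun i => ((R (a, j)).1 i : ℝ)) - θ (j + 1)) +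
          fun i => (d₀ i : ℝ))
    (k : Fin d → ℤ) (j : ZMod p) :
    ∃ ω : ℕ → Fin d → ℤ,
      (∀ n, ω n ∈ D) ∧
      (∀ (x : Fin d → ℝ) (n : ℕ),
        (tauWord A ω n x -
          ((((toR A)ᵀ)⁻¹) ^ n).mulVec (x + (fun i => (k i : ℝ)) - θ j) -
          θ (j + (n : ZMod p))) ∈ intLattice d) ∧
      (∀ ω' : ℕ → Fin d → ℤ, (∀ n, ω' n ∈ D) →
        (∀ (x : Fin d → ℝ) (n : ℕ),
          (tauWord A ω' n x -
            ((((toR A)ᵀ)⁻¹) ^ n).mulVec (x + (fun i => (k i : ℝ)) - θ j) -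
            θ (j + (n : ZMod p))) ∈ intLattice d) → ω' = ω) ∧
      (∀ n : ℕ, (fun i => (ω n i : ℝ)) =
        ((fun i => (((R^[n] (k, j)).1) i : ℝ)) - θ (j + (n : ZMod p))) -
          (toR A)ᵀ.mulVec
            ((fun i => (((R^[n + 1] (k, j)).1) i : ℝ)) - θ (j + ((n + 1 : ℕ) : ZMod p)))) ∧
      (∃ N q : ℕ, 1 ≤ q ∧ ∀ n, N ≤ n → ω (n + q) = ω n) := by
  have hB := hA.isUnit_det_transpose_toR
  choose hR2 g hgD hg using hR
  set ω : ℕ → Fin d → ℤ := fun n => g (R^[n] (k, j)).1 (R^[n] (k, j)).2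
  have hωD : ∀ n, ω n ∈ D := fun n => hgD _ _
  have hω := intCast_digit_iterate_eq hR2 hg k j
  have hlat (x : Fin d → ℝ) (n : ℕ) := by
    simpa only [Function.iterate_zero_apply, Nat.cast_zero, add_zero] using
      tauWord_sub_mem_intLattice hB hω x n
  obtain ⟨K, hK⟩ := ((hD.finite hA.det_ne_zero).image
    fun v : Fin d → ℤ => ‖(fun i => (v i : ℝ))‖).bddAbove
  have : NeZero p := ⟨hp.ne'⟩
  obtain ⟨N, q, hq, hper⟩ := Function.exists_iterate_add_eq_of_norm_sub_le (R := R) (k, j)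
      (c := fun n => θ (j + n))
    ((Set.finite_range θ).subset (Set.range_comp_subset_range (fun n : ℕ => j + n) θ))
    (norm_le_of_mulVec_recurrence hA.summable_norm_pow_inv (fun n => hK ⟨_, hωD n, rfl⟩)
      fun n => by rw [hω, sub_sub_cancel, mulVec_mulVec, nonsing_inv_mul _ hB, one_mulVec])
  refine ⟨ω, hωD, hlat, fun ω' hω'D hω' => ?_, hω, N, q, hq, fun n hn => by
    simp only [ω, hper n hn]⟩
  refine codeMap_injOn hB hD 0 hω'D hωD (funext fun n => QuotientAddGroup.eq_iff_sub_mem.mpr ?_)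
  convert sub_mem (hω' 0 n) (hlat 0 n) using 1
  abel

/-- encoding of an integer translate: for every k ∈ ℤ^d and
j ∈ ℤ/pℤ there is a unique digit string ω with
τ_{ω_{n−1}}⋯τ_{ω_0}(x) ≡ (Aᵀ)^{−n}(x + k − θ_j) + θ_{j+n}  mod ℤ^d for all x, n;
its digits are given by the generalized Euclidean algorithm via R_C, and ω is
eventually periodic. -/
theorem statement17 (d : ℕ) (hd : 0 < d) (A : Matrix (Fin d) (Fin d) ℤ)
    (hA : Expansive A) (D : Set (Fin d → ℤ)) (hD : CompleteDigits A D)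
    (p : ℕ) (hp : 0 < p) (θ : ZMod p → Fin d → ℝ) (l : ZMod p → Fin d → ℤ)
    (hl : ∀ j, l j ∈ D)
    (hcyc : ∀ j : ZMod p,
      (toR A)ᵀ.mulVec (θ (j + 1)) = θ j + fun i => (l j i : ℝ))
    (hsimple : ∀ j j' : ZMod p, j ≠ j' → (θ j - θ j') ∉ intLattice d)
    (R : (Fin d → ℤ) × ZMod p → (Fin d → ℤ) × ZMod p)
    (hR : ∀ (a : Fin d → ℤ) (j : ZMod p), (R (a, j)).2 = j + 1 ∧
      ∃ d₀ ∈ D, (fun i => (a i : ℝ)) - θ j =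
        (toR A)ᵀ.mulVec ((fun i => ((R (a, j)).1 i : ℝ)) - θ (j + 1)) +
          fun i => (d₀ i : ℝ))
    (k : Fin d → ℤ) (j : ZMod p) :
    ∃ ω : ℕ → Fin d → ℤ,
      (∀ n, ω n ∈ D) ∧
      (∀ (x : Fin d → ℝ) (n : ℕ),
        (tauWord A ω n x -
          ((((toR A)ᵀ)⁻¹) ^ n).mulVec (x + (fun i => (k i : ℝ)) - θ j) -
          θ (j + (n : ZMod p))) ∈ intLattice d) ∧
      (∀ ω' : ℕ → Fin d → ℤ, (∀ n, ω' n ∈ D) →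
        (∀ (x : Fin d → ℝ) (n : ℕ),
          (tauWord A ω' n x -
            ((((toR A)ᵀ)⁻¹) ^ n).mulVec (x + (fun i => (k i : ℝ)) - θ j) -
            θ (j + (n : ZMod p))) ∈ intLattice d) → ω' = ω) ∧
      (∀ n : ℕ, (fun i => (ω n i : ℝ)) =
        ((fun i => (((R^[n] (k, j)).1) i : ℝ)) - θ (j + (n : ZMod p))) -
          (toR A)ᵀ.mulVec
            ((fun i => (((R^[n + 1] (k, j)).1) i : ℝ)) - θ (j + ((n + 1 : ℕ) : ZMod p)))) ∧
      (∃ N q : ℕ, 1 ≤ q ∧ ∀ n, N ≤ n → ω (n + q) = ω n) :=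
  statement17_general d A hA D hD p hp θ R hR k j
end
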